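/- Let d ≥ 1 and let M be an invertible d×d real matrix such that every entry of M⁻¹ is nonzero. If y, y' : Fin d → ℝ differ in exactly one coordinate, then the unique solutions x = M⁻¹.mulVec y and x' = M⁻¹.mulVec y' of the equations M x = y and M x' = y' differ in every coordinate; in particular the Hamming distance between x and x' equals d. -/

import Mathlib

/-! Changing `y` in the single coordinate `l` changes it by a multiple of the basis vector
`e_l`, so `M⁻¹ y` changes by the same multiple of the column `l` of `M⁻¹`; since no entry
of that column vanishes, every coordinate of the plaintext changes. -/

open Matrix

theorem Pi.sub_eq_single_of_forall_ne {ι G : Type*} [DecidableEq ι] [AddGroup G]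
    {y y' : ι → G} {l : ι} (h : ∀ j, j ≠ l → y' j = y j) :
    y' - y = Pi.single l (y' l - y l) := by
  ext j
  rcases eq_or_ne j l with rfl | hj
  · simp
  · simp [h j hj, hj]

theorem hammingDist_eq_card_of_forall_ne {ι : Type*} [Fintype ι] {β : ι → Type*}
    [∀ i, DecidableEq (β i)] {x y : ∀ i, β i} (h : ∀ i, x i ≠ y i) :
    hammingDist x y = Fintype.card ι := by
  rw [hammingDist, Finset.filter_true_of_mem fun i _ => h i, Finset.card_univ]

namespace Matrix

variable {m n R : Type*} [Fintype n] [DecidableEq n]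

theorem mulVec_sub_mulVec_of_forall_ne [Ring R] (A : Matrix m n R) {y y' : n → R} {l : n}
    (h : ∀ j, j ≠ l → y' j = y j) (k : m) :
    (A *ᵥ y') k - (A *ᵥ y) k = A k l * (y' l - y l) := by
  rw [← Pi.sub_apply, ← mulVec_sub, Pi.sub_eq_single_of_forall_ne h, mulVec_single]
  rfl

theorem mulVec_apply_ne_of_forall_ne [Ring R] [NoZeroDivisors R] (A : Matrix m n R)
    {y y' : n → R} {l : n} {k : m} (hA : A k l ≠ 0) (hl : y' l ≠ y l)
    (h : ∀ j, j ≠ l → y' j = y j) :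
    (A *ᵥ y') k ≠ (A *ᵥ y) k := by
  rw [← sub_ne_zero, mulVec_sub_mulVec_of_forall_ne A h]
  exact mul_ne_zero hA (sub_ne_zero.mpr hl)

theorem mulVec_nonsing_inv_mulVec [CommRing R] {A : Matrix n n R} (hA : IsUnit A.det)
    (z : n → R) : A *ᵥ (A⁻¹ *ᵥ z) = z := by
  rw [mulVec_mulVec, mul_nonsing_inv A hA, one_mulVec]

end Matrix

theorem diffusion_converse_general (d : ℕ)
    (M : Matrix (Fin d) (Fin d) ℝ) (hM : IsUnit M.det)
    (hinv : ∀ i j, M⁻¹ i j ≠ 0)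
    (y y' : Fin d → ℝ) (l : Fin d)
    (hl : y' l ≠ y l) (hother : ∀ j, j ≠ l → y' j = y j) :
    (M.mulVec (M⁻¹.mulVec y) = y ∧ M.mulVec (M⁻¹.mulVec y') = y') ∧
    (∀ k, M⁻¹.mulVec y' k ≠ M⁻¹.mulVec y k) ∧
      hammingDist (M⁻¹.mulVec y) (M⁻¹.mulVec y') = d := by
  have hchange : ∀ k, M⁻¹.mulVec y' k ≠ M⁻¹.mulVec y k := fun k =>
    M⁻¹.mulVec_apply_ne_of_forall_ne (hinv k l) hl hother
  refine ⟨⟨mulVec_nonsing_inv_mulVec hM y, mulVec_nonsing_inv_mulVec hM y'⟩, hchange, ?_⟩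
  rw [hammingDist_eq_card_of_forall_ne fun k => (hchange k).symm, Fintype.card_fin]

/-- **Diffusion (converse direction).** If `M` is an invertible `d × d` real matrix
whose inverse has all entries nonzero, and the ciphertexts `y, y'` differ in exactly
one coordinate, then the unique solutions `x = M⁻¹ y` and `x' = M⁻¹ y'` of
`M x = y` and `M x' = y'` differ in every coordinate; in particular their Hamming
distance equals `d`. -/
theorem diffusion_converse (d : ℕ) (hd : 1 ≤ d)
    (M : Matrix (Fin d) (Fin d) ℝ) (hM : IsUnit M.det)
    (hinv : ∀ i j, M⁻¹ i j ≠ 0)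
    (y y' : Fin d → ℝ) (l : Fin d)
    (hl : y' l ≠ y l) (hother : ∀ j, j ≠ l → y' j = y j) :
    (M.mulVec (M⁻¹.mulVec y) = y ∧ M.mulVec (M⁻¹.mulVec y') = y') ∧
    (∀ k, M⁻¹.mulVec y' k ≠ M⁻¹.mulVec y k) ∧
      hammingDist (M⁻¹.mulVec y) (M⁻¹.mulVec y') = d :=
  diffusion_converse_general d M hM hinv y y' l hl hother
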